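/- (Bound on the change of GCN node representations under weight perturbation.) Consider an l-layer GCN as defined in the context with input node features X whose rows have ℓ2-norm at most B, on a simple graph with maximum node degree d − 1. Let U_1,…,U_l be perturbation matrices with ‖U_i‖₂ ≤ (1/l)‖W_i‖₂ for all i, and let H′_j denote the node representations computed with weights W_i + U_i in place of W_i. Then for every j with 1 ≤ j ≤ l − 1: max_i |H′_j[i,:] − H_j[i,:]|₂ ≤ B · d^{j/2} · (Π_{i=1}^{j} ‖W_i‖₂) · Σ_{k=1}^{j} (‖U_k‖₂ / ‖W_k‖₂) · (1 + 1/l)^{j−k}. -/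

import Mathlib

open Finset

/-- Euclidean (ℓ2) norm of a vector in `ℝ^q`. -/
noncomputable def l2norm {q : ℕ} (v : Fin q → ℝ) : ℝ := Real.sqrt (∑ j, v j ^ 2)

/-- Spectral norm of a real matrix: the operator norm induced by the Euclidean
vector norm, i.e. `sup {‖A v‖₂ : ‖v‖₂ ≤ 1}`. -/
noncomputable def specNorm {p q : ℕ} (A : Matrix (Fin p) (Fin q) ℝ) : ℝ :=
  sSup {r : ℝ | ∃ v : Fin q → ℝ, l2norm v ≤ 1 ∧ r = l2norm (A.mulVec v)}

/-- Frobenius norm of a real matrix. -/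
noncomputable def frobNorm {p q : ℕ} (A : Matrix (Fin p) (Fin q) ℝ) : ℝ :=
  Real.sqrt (∑ i, ∑ j, A i j ^ 2)

/-- `A` is the adjacency matrix of a simple undirected graph (0/1 entries, symmetric,
zero diagonal) with maximum node degree `d - 1`. -/
def IsSimpleAdj {n : ℕ} (d : ℕ) (A : Matrix (Fin n) (Fin n) ℝ) : Prop :=
  (∀ i j, A i j = 0 ∨ A i j = 1) ∧ (∀ i j, A i j = A j i) ∧ (∀ i, A i i = 0) ∧
    ∀ i, ∑ j, A i j ≤ (d : ℝ) - 1

/-- The normalized graph Laplacian `L = D^{-1/2} (A + I) D^{-1/2}` where `D` is the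
degree matrix of `Ã = A + I`; entrywise `L i j = Ã i j / (√(deg i) * √(deg j))`. -/
noncomputable def gLap {n : ℕ} (A : Matrix (Fin n) (Fin n) ℝ) :
    Matrix (Fin n) (Fin n) ℝ :=
  Matrix.of fun i j =>
    (A + 1) i j / (Real.sqrt (∑ k, (A + 1) i k) * Real.sqrt (∑ k, (A + 1) j k))

/-- ReLU nonlinearity. -/
def relu (x : ℝ) : ℝ := max 0 x

/-- Node representations of a GCN: `H 0 = X` and
`H (k+1) = ReLU(L̃ · H k · W k)` (entrywise ReLU), where `L̃ = gLap A`.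
Layer `k` (0-indexed) has weight `W k : ℝ^{dims k × dims (k+1)}`. -/
noncomputable def gcnH {n : ℕ} (A : Matrix (Fin n) (Fin n) ℝ) (dims : ℕ → ℕ)
    (W : (k : ℕ) → Matrix (Fin (dims k)) (Fin (dims (k + 1))) ℝ)
    (X : Matrix (Fin n) (Fin (dims 0)) ℝ) : (k : ℕ) → Matrix (Fin n) (Fin (dims k)) ℝ
  | 0 => X
  | (k + 1) => (gLap A * gcnH A dims W X k * W k).map relu

/-- Output of an `l`-layer GCN: the mean readout `(1/n) 1ₙ H_{l-1} W_l`
(with 0-indexed weights, the readout weight is `W (l-1)`). -/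
noncomputable def gcnOut {n : ℕ} (A : Matrix (Fin n) (Fin n) ℝ) (dims : ℕ → ℕ)
    (W : (k : ℕ) → Matrix (Fin (dims k)) (Fin (dims (k + 1))) ℝ)
    (X : Matrix (Fin n) (Fin (dims 0)) ℝ) (l : ℕ) : Fin (dims (l - 1 + 1)) → ℝ :=
  fun j => (1 / (n : ℝ)) * ∑ i, (gcnH A dims W X (l - 1) * W (l - 1)) i j



lemma l2norm_eq {q : ℕ} (v : Fin q → ℝ) :
    l2norm v = ‖(WithLp.equiv 2 (Fin q → ℝ)).symm v‖ := by
  rw [EuclideanSpace.norm_eq]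
  simp [l2norm, sq_abs]

lemma l2norm_nonneg {q : ℕ} (v : Fin q → ℝ) : 0 ≤ l2norm v := Real.sqrt_nonneg _

lemma specSet_bdd {p q : ℕ} (A : Matrix (Fin p) (Fin q) ℝ) :
    BddAbove {r : ℝ | ∃ v : Fin q → ℝ, l2norm v ≤ 1 ∧ r = l2norm (A.mulVec v)} := by
  classical
  set f := (Matrix.toEuclideanLin A).toContinuousLinearMap
  refine ⟨‖f‖, ?_⟩
  rintro r ⟨v, hv, rfl⟩
  have h1 : l2norm (A.mulVec v) = ‖f ((WithLp.equiv 2 (Fin q → ℝ)).symm v)‖ := by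
    rw [l2norm_eq]
    congr 1
  rw [h1]
  calc ‖f ((WithLp.equiv 2 (Fin q → ℝ)).symm v)‖ ≤ ‖f‖ * ‖(WithLp.equiv 2 (Fin q → ℝ)).symm v‖ :=
        f.le_opNorm _
    _ ≤ ‖f‖ * 1 := by
        apply mul_le_mul_of_nonneg_left _ (norm_nonneg f)
        rw [← l2norm_eq]; exact hv
    _ = ‖f‖ := mul_one _

lemma specNorm_nonneg {p q : ℕ} (A : Matrix (Fin p) (Fin q) ℝ) : 0 ≤ specNorm A := by
  apply le_csSup (specSet_bdd A)
  exact ⟨0, by simp [l2norm], by simp [l2norm]⟩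

lemma l2norm_smul {q : ℕ} (c : ℝ) (v : Fin q → ℝ) : l2norm (c • v) = |c| * l2norm v := by
  rw [l2norm_eq, l2norm_eq]
  have : (WithLp.equiv 2 (Fin q → ℝ)).symm (c • v) = c • (WithLp.equiv 2 (Fin q → ℝ)).symm v := by
    rfl
  rw [this, norm_smul, Real.norm_eq_abs]

lemma l2norm_mulVec_le {p q : ℕ} (A : Matrix (Fin p) (Fin q) ℝ) (v : Fin q → ℝ) :
    l2norm (A.mulVec v) ≤ specNorm A * l2norm v := by
  rcases eq_or_ne (l2norm v) 0 with h0 | h0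
  · have hv : v = 0 := by
      have := (Real.sqrt_eq_zero (by positivity)).mp h0
      funext i
      have h1 : v i ^ 2 = 0 := by
        have hle : v i ^ 2 ≤ ∑ j, v j ^ 2 :=
          Finset.single_le_sum (fun j _ => sq_nonneg (v j)) (Finset.mem_univ i)
        nlinarith [sq_nonneg (v i)]
      exact pow_eq_zero_iff (n := 2) (by norm_num) |>.mp h1
    simp [hv, h0, l2norm, Matrix.mulVec_zero]
  · have hpos : 0 < l2norm v := lt_of_le_of_ne (l2norm_nonneg v) (Ne.symm h0)
    have key : l2norm (A.mulVec ((l2norm v)⁻¹ • v)) ≤ specNorm A := by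
      apply le_csSup (specSet_bdd A)
      refine ⟨(l2norm v)⁻¹ • v, ?_, rfl⟩
      rw [l2norm_smul, abs_of_nonneg (by positivity), inv_mul_cancel₀ h0]
    rw [Matrix.mulVec_smul, l2norm_smul, abs_of_nonneg (by positivity)] at key
    calc l2norm (A.mulVec v) = l2norm v * ((l2norm v)⁻¹ * l2norm (A.mulVec v)) := by
          field_simp
      _ ≤ l2norm v * specNorm A := mul_le_mul_of_nonneg_left key hpos.le
      _ = specNorm A * l2norm v := mul_comm _ _

lemma specNorm_le {p q : ℕ} (A : Matrix (Fin p) (Fin q) ℝ) (C : ℝ) (hC : 0 ≤ C)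
    (h : ∀ v, l2norm (A.mulVec v) ≤ C * l2norm v) : specNorm A ≤ C := by
  apply Real.sSup_le _ hC
  rintro r ⟨v, hv, rfl⟩
  calc l2norm (A.mulVec v) ≤ C * l2norm v := h v
    _ ≤ C * 1 := mul_le_mul_of_nonneg_left hv hC
    _ = C := mul_one C


open scoped Matrix

lemma dotProduct_self_eq {q : ℕ} (v : Fin q → ℝ) : v ⬝ᵥ v = l2norm v ^ 2 := by
  rw [l2norm, Real.sq_sqrt (by positivity)]
  simp [dotProduct, sq]

lemma dotProduct_le {q : ℕ} (v w : Fin q → ℝ) : v ⬝ᵥ w ≤ l2norm v * l2norm w := by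
  have h := real_inner_le_norm ((WithLp.equiv 2 (Fin q → ℝ)).symm v)
    ((WithLp.equiv 2 (Fin q → ℝ)).symm w)
  rw [← l2norm_eq, ← l2norm_eq] at h
  refine le_trans (le_of_eq ?_) h
  simp [PiLp.inner_apply, RCLike.inner_apply, dotProduct, mul_comm]

lemma l2norm_transpose_mulVec_le {p q : ℕ} (A : Matrix (Fin p) (Fin q) ℝ) (v : Fin p → ℝ) :
    l2norm (A.transpose.mulVec v) ≤ specNorm A * l2norm v := by
  have key : (A.transpose.mulVec v) ⬝ᵥ (A.transpose.mulVec v)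
      = v ⬝ᵥ (A.mulVec (A.transpose.mulVec v)) := by
    conv_rhs => rw [Matrix.dotProduct_mulVec]
    rw [show v ᵥ* A = A.transpose.mulVec v from (Matrix.mulVec_transpose A v).symm]
  set u := A.transpose.mulVec v with hu
  rcases eq_or_lt_of_le (l2norm_nonneg u) with h0 | hpos
  · rw [← h0]; exact mul_nonneg (specNorm_nonneg A) (l2norm_nonneg v)
  · have h2 : l2norm u ^ 2 ≤ l2norm v * (specNorm A * l2norm u) := by
      rw [← dotProduct_self_eq, key]
      calc v ⬝ᵥ (A.mulVec u) ≤ l2norm v * l2norm (A.mulVec u) := dotProduct_le _ _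
        _ ≤ l2norm v * (specNorm A * l2norm u) :=
          mul_le_mul_of_nonneg_left (l2norm_mulVec_le A u) (l2norm_nonneg v)
    nlinarith [l2norm_nonneg v, specNorm_nonneg A]

lemma l2norm_add_le {q : ℕ} (u v : Fin q → ℝ) : l2norm (u + v) ≤ l2norm u + l2norm v := by
  rw [l2norm_eq, l2norm_eq, l2norm_eq]
  exact norm_add_le ((WithLp.equiv 2 (Fin q → ℝ)).symm u) ((WithLp.equiv 2 (Fin q → ℝ)).symm v)

lemma l2norm_sum_le {ι : Type*} {q : ℕ} (s : Finset ι) (f : ι → Fin q → ℝ) :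
    l2norm (∑ k ∈ s, f k) ≤ ∑ k ∈ s, l2norm (f k) := by
  classical
  induction s using Finset.induction with
  | empty => simp [l2norm]
  | insert _ _ h ih =>
      rw [Finset.sum_insert h, Finset.sum_insert h]
      exact le_trans (l2norm_add_le _ _) (by linarith)

lemma specNorm_add_le {p q : ℕ} (A B : Matrix (Fin p) (Fin q) ℝ) :
    specNorm (A + B) ≤ specNorm A + specNorm B := by
  apply specNorm_le _ _ (add_nonneg (specNorm_nonneg A) (specNorm_nonneg B))
  intro v
  rw [Matrix.add_mulVec]
  calc l2norm (A.mulVec v + B.mulVec v) ≤ l2norm (A.mulVec v) + l2norm (B.mulVec v) :=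
        l2norm_add_le _ _
    _ ≤ specNorm A * l2norm v + specNorm B * l2norm v :=
        add_le_add (l2norm_mulVec_le A v) (l2norm_mulVec_le B v)
    _ = (specNorm A + specNorm B) * l2norm v := by ring

lemma row_mul_le {p q r : ℕ} (H : Matrix (Fin p) (Fin q) ℝ) (W : Matrix (Fin q) (Fin r) ℝ)
    (i : Fin p) : l2norm ((H * W) i) ≤ specNorm W * l2norm (H i) := by
  have h : (H * W) i = W.transpose.mulVec (H i) := by
    funext a
    simp [Matrix.mul_apply, Matrix.mulVec, dotProduct, Matrix.transpose_apply, mul_comm]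
  rw [h]
  exact l2norm_transpose_mulVec_le W (H i)

lemma l2norm_le_of_abs_le {q : ℕ} (x y : Fin q → ℝ) (h : ∀ a, |x a| ≤ |y a|) :
    l2norm x ≤ l2norm y := by
  apply Real.sqrt_le_sqrt
  apply Finset.sum_le_sum
  intro a _
  rw [← sq_abs (x a), ← sq_abs (y a)]
  exact pow_le_pow_left₀ (abs_nonneg _) (h a) 2

lemma relu_sub_le {q : ℕ} (x y : Fin q → ℝ) :
    l2norm (fun a => relu (x a) - relu (y a)) ≤ l2norm (fun a => x a - y a) := by
  apply l2norm_le_of_abs_le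
  intro a
  have := abs_max_sub_max_le_abs (x a) (y a) 0
  simpa [relu, max_comm] using this

lemma rows_mul_bound {n q : ℕ} (L : Matrix (Fin n) (Fin n) ℝ) (H : Matrix (Fin n) (Fin q) ℝ)
    (i : Fin n) (hL : ∀ k, 0 ≤ L i k) (c s : ℝ) (hc : 0 ≤ c)
    (hrow : ∀ k, l2norm (H k) ≤ c) (hs : ∑ k, L i k ≤ s) :
    l2norm ((L * H) i) ≤ s * c := by
  have h : (L * H) i = ∑ k, L i k • H k := by
    funext a
    simp [Matrix.mul_apply, Finset.sum_apply]
  rw [h]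
  calc l2norm (∑ k, L i k • H k) ≤ ∑ k, l2norm (L i k • H k) := l2norm_sum_le _ _
    _ = ∑ k, L i k * l2norm (H k) := by
        apply Finset.sum_congr rfl
        intro k _
        rw [l2norm_smul, abs_of_nonneg (hL k)]
    _ ≤ ∑ k, L i k * c := by
        apply Finset.sum_le_sum
        intro k _
        exact mul_le_mul_of_nonneg_left (hrow k) (hL k)
    _ = (∑ k, L i k) * c := by rw [← Finset.sum_mul]
    _ ≤ s * c := mul_le_mul_of_nonneg_right hs hc




section GLap

variable {n d : ℕ} {A : Matrix (Fin n) (Fin n) ℝ}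

lemma tilde_nonneg (hA : IsSimpleAdj d A) (i j : Fin n) : 0 ≤ (A + 1) i j := by
  have h0 : (0:ℝ) ≤ A i j := by rcases hA.1 i j with h | h <;> simp [h]
  have h1 : (0:ℝ) ≤ (1 : Matrix (Fin n) (Fin n) ℝ) i j := by
    rw [Matrix.one_apply]; split <;> norm_num
  simpa [Matrix.add_apply] using add_nonneg h0 h1

lemma deg_eq (i : Fin n) : ∑ k, (A + 1) i k = (∑ k, A i k) + 1 := by
  simp [Matrix.add_apply, Matrix.one_apply, Finset.sum_add_distrib]

lemma deg_one_le (hA : IsSimpleAdj d A) (i : Fin n) : 1 ≤ ∑ k, (A + 1) i k := by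
  rw [deg_eq]
  have : (0:ℝ) ≤ ∑ k, A i k := Finset.sum_nonneg fun k _ => by
    rcases hA.1 i k with h | h <;> simp [h]
  linarith

lemma deg_le_d (hA : IsSimpleAdj d A) (i : Fin n) : ∑ k, (A + 1) i k ≤ (d:ℝ) := by
  rw [deg_eq]
  have := hA.2.2.2 i
  linarith

lemma gLap_nonneg (hA : IsSimpleAdj d A) (i j : Fin n) : 0 ≤ gLap A i j := by
  unfold gLap
  simp only [Matrix.of_apply]
  exact div_nonneg (tilde_nonneg hA i j)
    (mul_nonneg (Real.sqrt_nonneg _) (Real.sqrt_nonneg _))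

lemma gLap_rowsum (hA : IsSimpleAdj d A) (i : Fin n) :
    ∑ k, gLap A i k ≤ Real.sqrt d := by
  have hdi : 1 ≤ Real.sqrt (∑ m, (A + 1) i m) := by
    rw [show (1:ℝ) = Real.sqrt 1 from (Real.sqrt_one).symm]
    exact Real.sqrt_le_sqrt (deg_one_le hA i)
  calc ∑ k, gLap A i k
      ≤ ∑ k, (A + 1) i k / Real.sqrt (∑ m, (A + 1) i m) := by
        apply Finset.sum_le_sum
        intro k _
        unfold gLap
        simp only [Matrix.of_apply]
        have hdk : 1 ≤ Real.sqrt (∑ m, (A + 1) k m) := by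
          rw [show (1:ℝ) = Real.sqrt 1 from (Real.sqrt_one).symm]
          exact Real.sqrt_le_sqrt (deg_one_le hA k)
        rw [← div_div]
        exact div_le_self (div_nonneg (tilde_nonneg hA i k) (Real.sqrt_nonneg _)) hdk
    _ = (∑ k, (A + 1) i k) / Real.sqrt (∑ m, (A + 1) i m) := by rw [Finset.sum_div]
    _ = Real.sqrt (∑ m, (A + 1) i m) := Real.div_sqrt
    _ ≤ Real.sqrt d := Real.sqrt_le_sqrt (deg_le_d hA i)

end GLap

lemma l2norm_relu_le {q : ℕ} (x : Fin q → ℝ) :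
    l2norm (fun a => relu (x a)) ≤ l2norm x := by
  apply l2norm_le_of_abs_le
  intro a
  unfold relu
  rcases le_total (x a) 0 with h | h
  · rw [max_eq_left h]; simp
  · rw [max_eq_right h]

lemma gcn_row_norm_bound {n d : ℕ} {A : Matrix (Fin n) (Fin n) ℝ} (hA : IsSimpleAdj d A)
    (dims : ℕ → ℕ) (V : (k : ℕ) → Matrix (Fin (dims k)) (Fin (dims (k + 1))) ℝ)
    (X : Matrix (Fin n) (Fin (dims 0)) ℝ) (B : ℝ) (hB : 0 ≤ B) (hX : ∀ i, l2norm (X i) ≤ B)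
    (j : ℕ) :
    ∀ i, l2norm (gcnH A dims V X j i) ≤
      B * (Real.sqrt d) ^ j * ∏ k ∈ Finset.range j, specNorm (V k) := by
  induction j with
  | zero => intro i; simpa [gcnH] using hX i
  | succ j ih =>
    intro i
    have hc : 0 ≤ B * (Real.sqrt d) ^ j * ∏ k ∈ Finset.range j, specNorm (V k) :=
      mul_nonneg (mul_nonneg hB (pow_nonneg (Real.sqrt_nonneg _) j))
        (Finset.prod_nonneg fun k _ => specNorm_nonneg _)
    have heq : (gcnH A dims V X (j+1)) i
        = fun a => relu ((gLap A * gcnH A dims V X j * V j) i a) := rfl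
    rw [heq]
    calc l2norm (fun a => relu ((gLap A * gcnH A dims V X j * V j) i a))
        ≤ l2norm ((gLap A * gcnH A dims V X j * V j) i) := l2norm_relu_le _
      _ ≤ specNorm (V j) * l2norm ((gLap A * gcnH A dims V X j) i) := row_mul_le _ _ i
      _ ≤ specNorm (V j) * (Real.sqrt d *
            (B * (Real.sqrt d) ^ j * ∏ k ∈ Finset.range j, specNorm (V k))) := by
          apply mul_le_mul_of_nonneg_left _ (specNorm_nonneg _)
          exact rows_mul_bound (gLap A) _ i (fun k => gLap_nonneg hA i k) _ _ hc ih
            (gLap_rowsum hA i)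
      _ = B * (Real.sqrt d) ^ (j+1) * ∏ k ∈ Finset.range (j+1), specNorm (V k) := by
          rw [Finset.prod_range_succ, pow_succ]
          ring

lemma gcn_delta_bound {n d : ℕ} {A : Matrix (Fin n) (Fin n) ℝ} (hA : IsSimpleAdj d A)
    (l : ℕ) (hl : 1 < l) (B : ℝ) (hB : 0 ≤ B)
    (dims : ℕ → ℕ) (W U : (k : ℕ) → Matrix (Fin (dims k)) (Fin (dims (k + 1))) ℝ)
    (hU : ∀ k < l, specNorm (U k) ≤ specNorm (W k) / l)
    (X : Matrix (Fin n) (Fin (dims 0)) ℝ) (hX : ∀ i, l2norm (X i) ≤ B) :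
    ∀ j, j ≤ l → ∀ i,
      l2norm (fun a => gcnH A dims (fun k => W k + U k) X j i a - gcnH A dims W X j i a) ≤
      B * (Real.sqrt d) ^ j * (∏ k ∈ Finset.range j, specNorm (W k)) *
        ∑ k ∈ Finset.range j,
          specNorm (U k) / specNorm (W k) * (1 + 1 / (l : ℝ)) ^ (j - 1 - k) := by
  intro j
  induction j with
  | zero => intro _ i; simp [gcnH, l2norm]
  | succ j ih =>
    intro hjl i
    have ih' := ih (by omega)
    have hjlt : j < l := by omega
    set L := gLap A with hL
    set H' := gcnH A dims (fun k => W k + U k) X j with hH'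
    set H := gcnH A dims W X j with hH
    set t : ℝ := 1 + 1 / (l : ℝ) with hT
    set sd : ℝ := Real.sqrt d with hsd
    set Pj : ℝ := ∏ k ∈ Finset.range j, specNorm (W k) with hPj
    set Sj : ℝ := ∑ k ∈ Finset.range j,
      specNorm (U k) / specNorm (W k) * t ^ (j - 1 - k) with hSj
    have hsd0 : 0 ≤ sd := Real.sqrt_nonneg _
    have ht0 : (0:ℝ) ≤ t := by rw [hT]; positivity
    have hPj0 : 0 ≤ Pj := Finset.prod_nonneg fun k _ => specNorm_nonneg _
    have hSj0 : 0 ≤ Sj := Finset.sum_nonneg fun k _ =>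
      mul_nonneg (div_nonneg (specNorm_nonneg _) (specNorm_nonneg _)) (pow_nonneg ht0 _)
    have hDj0 : 0 ≤ B * sd ^ j * Pj * Sj :=
      mul_nonneg (mul_nonneg (mul_nonneg hB (pow_nonneg hsd0 j)) hPj0) hSj0
    have hMj0 : 0 ≤ B * sd ^ j * Pj :=
      mul_nonneg (mul_nonneg hB (pow_nonneg hsd0 j)) hPj0
    -- unfold one step of gcnH
    have heq1 : ∀ a, gcnH A dims (fun k => W k + U k) X (j+1) i a
        = relu ((L * H' * (W j + U j)) i a) := fun a => rfl
    have heq2 : ∀ a, gcnH A dims W X (j+1) i a = relu ((L * H * W j) i a) := fun a => rfl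
    simp only [heq1, heq2]
    -- split
    have hsplitM : L * H' * (W j + U j) - L * H * W j
        = (L * (H' - H)) * (W j + U j) + (L * H) * (U j) := by
      simp only [Matrix.mul_sub, Matrix.sub_mul, Matrix.mul_add]
      abel
    have h1 : (fun a => (L * H' * (W j + U j)) i a - (L * H * W j) i a)
        = (((L * (H' - H)) * (W j + U j)) i) + (((L * H) * (U j)) i) := by
      funext a
      show ((L * H' * (W j + U j)) - (L * H * W j)) i a = _
      rw [hsplitM]
      rfl
    -- row bounds
    have hrow1 : l2norm (((L * (H' - H)) * (W j + U j)) i)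
        ≤ specNorm (W j + U j) * (sd * (B * sd ^ j * Pj * Sj)) := by
      refine (row_mul_le _ _ i).trans
        (mul_le_mul_of_nonneg_left ?_ (specNorm_nonneg _))
      refine rows_mul_bound L (H' - H) i (fun k => gLap_nonneg hA i k) _ _ hDj0 ?_
        (gLap_rowsum hA i)
      intro k
      exact ih' k
    have hrow2 : l2norm (((L * H) * (U j)) i)
        ≤ specNorm (U j) * (sd * (B * sd ^ j * Pj)) := by
      refine (row_mul_le _ _ i).trans
        (mul_le_mul_of_nonneg_left ?_ (specNorm_nonneg _))
      exact rows_mul_bound L H i (fun k => gLap_nonneg hA i k) _ _ hMj0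
        (gcn_row_norm_bound hA dims W X B hB hX j) (gLap_rowsum hA i)
    -- weight norm bounds
    have ha1 : specNorm (W j + U j) ≤ specNorm (W j) * t := by
      calc specNorm (W j + U j) ≤ specNorm (W j) + specNorm (U j) := specNorm_add_le _ _
        _ ≤ specNorm (W j) + specNorm (W j) / l := by linarith [hU j hjlt]
        _ = specNorm (W j) * t := by rw [hT]; field_simp
    have ha2 : specNorm (U j) ≤ specNorm (W j) * (specNorm (U j) / specNorm (W j)) := by
      rcases eq_or_ne (specNorm (W j)) 0 with h0 | h0
      · have h1 : specNorm (U j) ≤ 0 := by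
          have := hU j hjlt; rw [h0] at this; simpa using this
        simp [h0]
        linarith
      · rw [mul_div_cancel₀ _ h0]
    -- combine
    calc l2norm (fun a => relu ((L * H' * (W j + U j)) i a) - relu ((L * H * W j) i a))
        ≤ l2norm (fun a => (L * H' * (W j + U j)) i a - (L * H * W j) i a) :=
          relu_sub_le _ _
      _ = l2norm ((((L * (H' - H)) * (W j + U j)) i) + (((L * H) * (U j)) i)) := by rw [h1]
      _ ≤ l2norm (((L * (H' - H)) * (W j + U j)) i) + l2norm (((L * H) * (U j)) i) :=
          l2norm_add_le _ _
      _ ≤ specNorm (W j + U j) * (sd * (B * sd ^ j * Pj * Sj))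
            + specNorm (U j) * (sd * (B * sd ^ j * Pj)) := add_le_add hrow1 hrow2
      _ ≤ (specNorm (W j) * t) * (sd * (B * sd ^ j * Pj * Sj))
            + (specNorm (W j) * (specNorm (U j) / specNorm (W j)))
              * (sd * (B * sd ^ j * Pj)) := by
          apply add_le_add
          · exact mul_le_mul_of_nonneg_right ha1 (by positivity)
          · exact mul_le_mul_of_nonneg_right ha2 (by positivity)
      _ = B * sd ^ (j+1) * (Pj * specNorm (W j))
            * (t * Sj + specNorm (U j) / specNorm (W j)) := by rw [pow_succ]; ring
      _ = B * sd ^ (j+1) * (∏ k ∈ Finset.range (j+1), specNorm (W k)) *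
            ∑ k ∈ Finset.range (j+1),
              specNorm (U k) / specNorm (W k) * t ^ (j + 1 - 1 - k) := by
          rw [Finset.prod_range_succ, Finset.sum_range_succ]
          congr 1
          have hts : t * Sj = ∑ k ∈ Finset.range j,
              specNorm (U k) / specNorm (W k) * t ^ (j + 1 - 1 - k) := by
            rw [hSj, Finset.mul_sum]
            apply Finset.sum_congr rfl
            intro k hk
            have hkj : k < j := Finset.mem_range.mp hk
            rw [show j + 1 - 1 - k = (j - 1 - k) + 1 from by omega, pow_succ]
            ring
          rw [← hts]
          simp [Nat.sub_self]


/-- Bound on the change of GCN node representations under weight perturbation: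
if `‖U_i‖₂ ≤ ‖W_i‖₂ / l` for all layers, then for every layer `1 ≤ j ≤ l - 1` and node `i`,
`|H′_j[i,:] − H_j[i,:]|₂ ≤ B · d^{j/2} · (∏_{i=1}^{j} ‖W_i‖₂) ·
  Σ_{k=1}^{j} (‖U_k‖₂/‖W_k‖₂) (1 + 1/l)^{j−k}` (0-indexed below). -/
theorem gcn_hidden_perturbation_bound {n : ℕ} (d l : ℕ) (hl : 1 < l) (B : ℝ) (hB : 0 < B)
    (A : Matrix (Fin n) (Fin n) ℝ) (hA : IsSimpleAdj d A)
    (dims : ℕ → ℕ) (W U : (k : ℕ) → Matrix (Fin (dims k)) (Fin (dims (k + 1))) ℝ)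
    (hU : ∀ k < l, specNorm (U k) ≤ specNorm (W k) / l)
    (X : Matrix (Fin n) (Fin (dims 0)) ℝ) (hX : ∀ i, l2norm (X i) ≤ B)
    (j : ℕ) (hj1 : 1 ≤ j) (hj2 : j ≤ l - 1) :
    ∀ i, l2norm (fun a => gcnH A dims (fun k => W k + U k) X j i a - gcnH A dims W X j i a) ≤
      B * (d : ℝ) ^ ((j : ℝ) / 2) * (∏ k ∈ Finset.range j, specNorm (W k)) *
        ∑ k ∈ Finset.range j,
          specNorm (U k) / specNorm (W k) * (1 + 1 / (l : ℝ)) ^ (j - 1 - k) := by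
  have hd : (d : ℝ) ^ ((j : ℝ) / 2) = (Real.sqrt d) ^ j := by
    rw [Real.sqrt_eq_rpow, ← Real.rpow_natCast ((d:ℝ) ^ ((1:ℝ)/2)) j,
      ← Real.rpow_mul (Nat.cast_nonneg d)]
    congr 1
    ring
  rw [hd]
  exact gcn_delta_bound hA l hl B hB.le dims W U hU X hX j (by omega)
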